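/- arXiv:1001.2728 — 2 statements merged into one kernel-verified Lean document; each statement's English description precedes it below -/
import Mathlib

section
/- Let (C^{0̄}, C^{1̄}, d_{0̄}, d_{1̄}) be a Z₂-graded finite dimensional complex with non-degenerate symmetric bilinear forms b, adjoints d^#, and Laplacians Δ_{b,k̄} = d^#_{k̄} d_{k̄} + d_{\overline{k+1}} d^#_{\overline{k+1}}. Let C^{k̄}_b(0) denote the generalized 0-eigenspace of Δ_{b,k̄}. Then the inclusion of the subcomplex (C^{•}_b(0), d) into (C^{•}, d) induces an isomorphism in cohomology: H^{k̄}(C^{•}_b(0)) ≅ H^{k̄}(C^{•}) for k = 0, 1. -/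
open Module

/-- Auxiliary: one degree of the quasi-isomorphism, stated symmetrically. -/
theorem zhodge_aux
    (A B : Type) [AddCommGroup A] [Module ℂ A] [AddCommGroup B] [Module ℂ B]
    [FiniteDimensional ℂ A] [FiniteDimensional ℂ B]
    (dA : A →ₗ[ℂ] B) (dB : B →ₗ[ℂ] A)
    (ΔA : Module.End ℂ A) (ΔB : Module.End ℂ B)
    (hcA : ∀ x, dA (ΔA x) = ΔB (dA x))
    (hcB : ∀ x, dB (ΔB x) = ΔA (dB x))
    (hΔA : ∀ w, dA w = 0 → ΔA w ∈ LinearMap.range dB)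
    (EA : Submodule ℂ A) (hEA : EA = ΔA.maxGenEigenspace 0)
    (EB : Submodule ℂ B) (hEB : EB = ΔB.maxGenEigenspace 0) :
    (LinearMap.ker dA ≤ (LinearMap.ker dA ⊓ EA) ⊔ LinearMap.range dB) ∧
    (EA ⊓ LinearMap.ker dA ⊓ LinearMap.range dB ≤ Submodule.map dB EB) := by
  -- power commutation
  have hpA : ∀ (n : ℕ) (x : A), dA ((ΔA ^ n) x) = (ΔB ^ n) (dA x) := by
    intro n
    induction n with
    | zero => simp
    | succ n ih =>
      intro x
      rw [pow_succ, pow_succ]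
      simp only [Module.End.mul_apply]
      rw [ih, hcA]
  have hpB : ∀ (n : ℕ) (x : B), dB ((ΔB ^ n) x) = (ΔA ^ n) (dB x) := by
    intro n
    induction n with
    | zero => simp
    | succ n ih =>
      intro x
      rw [pow_succ, pow_succ]
      simp only [Module.End.mul_apply]
      rw [ih, hcB]
  -- Fitting decomposition data, with a common exponent `K`
  obtain ⟨NA, hA⟩ := Filter.eventually_atTop.mp
    ((ΔA.eventually_isCompl_ker_pow_range_pow).and
      ((ΔA.eventually_iSup_ker_pow_eq).and (ΔA.eventually_iInf_range_pow_eq)))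
  obtain ⟨NB, hB⟩ := Filter.eventually_atTop.mp
    ((ΔB.eventually_isCompl_ker_pow_range_pow).and
      ((ΔB.eventually_iSup_ker_pow_eq).and (ΔB.eventually_iInf_range_pow_eq)))
  set K := max NA NB with hK
  have hAK := hA K (le_max_left _ _)
  have hBK := hB K (le_max_right _ _)
  have hAK1 := hA (K + 1) ((le_max_left _ _).trans (Nat.le_succ K))
  -- the generalized eigenspaces are the kernels of the `K`-th powers
  have hmaxA : ΔA.maxGenEigenspace 0 = ⨆ n : ℕ, LinearMap.ker (ΔA ^ n) := by
    simp [← Module.End.iSup_genEigenspace_eq, Module.End.genEigenspace_nat]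
  have hmaxB : ΔB.maxGenEigenspace 0 = ⨆ n : ℕ, LinearMap.ker (ΔB ^ n) := by
    simp [← Module.End.iSup_genEigenspace_eq, Module.End.genEigenspace_nat]
  have hEA' : EA = LinearMap.ker (ΔA ^ K) := by rw [hEA, hmaxA, hAK.2.1]
  have hEB' : EB = LinearMap.ker (ΔB ^ K) := by rw [hEB, hmaxB, hBK.2.1]
  have rangeA_stab : LinearMap.range (ΔA ^ (K + 1)) = LinearMap.range (ΔA ^ K) := by
    rw [← hAK1.2.2, hAK.2.2]
  have hdisjA := hAK.1.disjoint
  have hdisjB := hBK.1.disjoint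
  constructor
  · -- surjectivity
    intro x hx
    have hxker : dA x = 0 := hx
    have hxsup : x ∈ LinearMap.ker (ΔA ^ K) ⊔ LinearMap.range (ΔA ^ K) := by
      rw [codisjoint_iff.mp hAK.1.codisjoint]; trivial
    obtain ⟨e, he, f, hf, hef⟩ := Submodule.mem_sup.mp hxsup
    obtain ⟨y, hy⟩ := hf
    have hde : dA e ∈ LinearMap.ker (ΔB ^ K) := by
      rw [LinearMap.mem_ker, ← hpA, he, map_zero]
    have hdf : dA f ∈ LinearMap.range (ΔB ^ K) := ⟨dA y, by rw [← hpA, hy]⟩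
    have hsum : dA e + dA f = 0 := by rw [← map_add, hef]; exact hxker
    have hde0 : dA e = 0 := by
      have h1 : dA e = -(dA f) := by
        rw [eq_neg_iff_add_eq_zero]; exact hsum
      have h2 : dA e ∈ LinearMap.range (ΔB ^ K) := by
        rw [h1]; exact Submodule.neg_mem _ hdf
      exact Submodule.disjoint_def.mp hdisjB _ hde h2
    have hdf0 : dA f = 0 := by
      have := hsum; rw [hde0, zero_add] at this; exact this
    -- `f` is a coboundary
    have hf1 : f ∈ LinearMap.range (ΔA ^ (K + 1)) := by rw [rangeA_stab]; exact ⟨y, hy⟩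
    obtain ⟨z, hz⟩ := hf1
    set w : A := (ΔA ^ K) z with hw
    have hΔw : ΔA w = f := by
      rw [hw, ← Module.End.mul_apply, ← pow_succ', hz]
    have hdw0 : dA w = 0 := by
      have h1 : dA w ∈ LinearMap.ker (ΔB ^ K) := by
        rw [LinearMap.mem_ker]
        have hk1 : LinearMap.ker ΔB ≤ LinearMap.ker (ΔB ^ K) := by
          rw [← hBK.2.1]
          exact le_iSup_of_le 1 (by rw [pow_one])
        have : ΔB (dA w) = 0 := by rw [← hcA, hΔw, hdf0]
        have := hk1 (LinearMap.mem_ker.mpr this)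
        exact this
      have h2 : dA w ∈ LinearMap.range (ΔB ^ K) := ⟨dA z, by rw [← hpA, hw]⟩
      exact Submodule.disjoint_def.mp hdisjB _ h1 h2
    have hfrange : f ∈ LinearMap.range dB := by rw [← hΔw]; exact hΔA w hdw0
    refine Submodule.mem_sup.mpr ⟨e, ⟨?_, ?_⟩, f, hfrange, hef⟩
    · exact LinearMap.mem_ker.mpr hde0
    · rw [hEA']; exact he
  · -- injectivity
    rintro x ⟨⟨hxE, -⟩, u, rfl⟩
    have husup : u ∈ LinearMap.ker (ΔB ^ K) ⊔ LinearMap.range (ΔB ^ K) := by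
      rw [codisjoint_iff.mp hBK.1.codisjoint]; trivial
    obtain ⟨e, he, f, hf, hef⟩ := Submodule.mem_sup.mp husup
    obtain ⟨y, hy⟩ := hf
    have hde : dB e ∈ LinearMap.ker (ΔA ^ K) := by
      rw [LinearMap.mem_ker, ← hpB, he, map_zero]
    have hdf : dB f ∈ LinearMap.range (ΔA ^ K) := ⟨dB y, by rw [← hpB, hy]⟩
    have hdf0 : dB f = 0 := by
      have h1 : dB f = dB u - dB e := by rw [← hef, map_add]; abel
      have h2 : dB f ∈ LinearMap.ker (ΔA ^ K) := by
        rw [h1]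
        refine Submodule.sub_mem _ ?_ hde
        rw [← hEA']; exact hxE
      exact Submodule.disjoint_def.mp hdisjA _ h2 hdf
    refine ⟨e, by rw [hEB']; exact he, ?_⟩
    rw [← hef, map_add, hdf0, add_zero]

/-- the inclusion of the subcomplex of generalized `0`-eigenspaces of the
Laplacians into the full Z₂-graded complex induces an isomorphism in cohomology.  This is
expressed elementarily: every cocycle is cohomologous to a cocycle in the generalized
`0`-eigenspace (surjectivity), and a cocycle of the subcomplex which is a coboundary in the
full complex is a coboundary in the subcomplex (injectivity), in both degrees. -/
theorem inclusion_of_zero_eigenspace_quasi_iso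
    (C0 C1 : Type) [AddCommGroup C0] [Module ℂ C0] [AddCommGroup C1] [Module ℂ C1]
    [FiniteDimensional ℂ C0] [FiniteDimensional ℂ C1]
    (b0 : C0 →ₗ[ℂ] C0 →ₗ[ℂ] ℂ) (b1 : C1 →ₗ[ℂ] C1 →ₗ[ℂ] ℂ)
    (hb0symm : ∀ x y, b0 x y = b0 y x) (hb1symm : ∀ x y, b1 x y = b1 y x)
    (hb0nd : ∀ x, (∀ y, b0 x y = 0) → x = 0) (hb1nd : ∀ x, (∀ y, b1 x y = 0) → x = 0)
    (d0 : C0 →ₗ[ℂ] C1) (d1 : C1 →ₗ[ℂ] C0)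
    (hd10 : d1 ∘ₗ d0 = 0) (hd01 : d0 ∘ₗ d1 = 0)
    (d0s : C1 →ₗ[ℂ] C0) (d1s : C0 →ₗ[ℂ] C1)
    (hadj0 : ∀ x y, b1 (d0 x) y = b0 x (d0s y))
    (hadj1 : ∀ x y, b0 (d1 x) y = b1 x (d1s y))
    -- the Laplacians
    (Δ0 : Module.End ℂ C0) (hΔ0 : Δ0 = d0s ∘ₗ d0 + d1 ∘ₗ d1s)
    (Δ1 : Module.End ℂ C1) (hΔ1 : Δ1 = d1s ∘ₗ d1 + d0 ∘ₗ d0s)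
    -- the generalized 0-eigenspaces
    (E0 : Submodule ℂ C0) (hE0 : E0 = Δ0.maxGenEigenspace 0)
    (E1 : Submodule ℂ C1) (hE1 : E1 = Δ1.maxGenEigenspace 0) :
    -- surjectivity in cohomology, degree 0̄ and 1̄
    (LinearMap.ker d0 ≤ (LinearMap.ker d0 ⊓ E0) ⊔ LinearMap.range d1) ∧
    (LinearMap.ker d1 ≤ (LinearMap.ker d1 ⊓ E1) ⊔ LinearMap.range d0) ∧
    -- injectivity in cohomology, degree 0̄ and 1̄
    (E0 ⊓ LinearMap.ker d0 ⊓ LinearMap.range d1 ≤ Submodule.map d1 E1) ∧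
    (E1 ⊓ LinearMap.ker d1 ⊓ LinearMap.range d0 ≤ Submodule.map d0 E0) := by
  have h10 : ∀ x, d1 (d0 x) = 0 := fun x => LinearMap.congr_fun hd10 x
  have h01 : ∀ x, d0 (d1 x) = 0 := fun x => LinearMap.congr_fun hd01 x
  have hc0 : ∀ x, d0 (Δ0 x) = Δ1 (d0 x) := by
    intro x
    rw [hΔ0, hΔ1]
    simp only [LinearMap.add_apply, LinearMap.comp_apply, map_add, h10, h01, map_zero,
      add_zero, zero_add]
  have hc1 : ∀ x, d1 (Δ1 x) = Δ0 (d1 x) := by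
    intro x
    rw [hΔ0, hΔ1]
    simp only [LinearMap.add_apply, LinearMap.comp_apply, map_add, h10, h01, map_zero,
      add_zero, zero_add]
  have hL0 : ∀ w, d0 w = 0 → Δ0 w ∈ LinearMap.range d1 := by
    intro w hw
    refine ⟨d1s w, ?_⟩
    rw [hΔ0]
    simp [LinearMap.add_apply, LinearMap.comp_apply, hw]
  have hL1 : ∀ w, d1 w = 0 → Δ1 w ∈ LinearMap.range d0 := by
    intro w hw
    refine ⟨d0s w, ?_⟩
    rw [hΔ1]
    simp [LinearMap.add_apply, LinearMap.comp_apply, hw]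
  obtain ⟨hs0, hi0⟩ := zhodge_aux C0 C1 d0 d1 Δ0 Δ1 hc0 hc1 hL0 E0 hE0 E1 hE1
  obtain ⟨hs1, hi1⟩ := zhodge_aux C1 C0 d1 d0 Δ1 Δ0 hc1 hc0 hL1 E1 hE1 E0 hE0
  exact ⟨hs0, hs1, hi0, hi1⟩
end

section
/- Let (C^{0̄}, C^{1̄}, d_{0̄}, d_{1̄}) be a Z₂-graded finite dimensional complex with non-degenerate symmetric bilinear forms b, and suppose the Laplacians Δ_{b,0̄} and Δ_{b,1̄} are invertible (i.e. their generalized 0-eigenspaces vanish). Then for each k, C^{k̄} = im(d_{\overline{k+1}}) ⊕ im(d^#_{k̄}), and this decomposition is b-orthogonal and invariant under Δ_{b,k̄}. -/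
/-!
In each degree the Laplacian has the form `Δ = d^# d + a a^#`, where `a` is the incoming
differential and `d` the outgoing one. Invertibility of `Δ` gives `C = im Δ ⊆ im a + im d^#`.
Since `d a = 0`, the images `im a` and `im d^#` are `b`-orthogonal, so by non-degeneracy
they meet in `0`. Finally `Δ a = a (a^# a)` and, as `a^# d^# = (d a)^# = 0`,
`Δ d^# = d^# (d d^#)`, which gives the invariance.
-/

open Module LinearMap Submodule

theorem Submodule.map_range_le_range_of_comp_eq {R M N : Type*} [Semiring R] [AddCommMonoid M]
    [Module R M] [AddCommMonoid N] [Module R N] {T : Module.End R M} {f : N →ₗ[R] M}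
    {g : Module.End R N} (hf : T ∘ₗ f = f ∘ₗ g) : map T (range f) ≤ range f := by
  rw [← range_comp, hf]
  exact range_comp_le_range _ _

section HodgeDecomposition

variable {R U V W : Type*} [CommSemiring R] [AddCommMonoid U] [Module R U]
  [AddCommMonoid V] [Module R V] [AddCommMonoid W] [Module R W]

def hodgeLaplacian (a : U →ₗ[R] V) (as : V →ₗ[R] U) (d : V →ₗ[R] W) (ds : W →ₗ[R] V) :
    Module.End R V :=
  ds ∘ₗ d + a ∘ₗ as

theorem LinearMap.IsAdjointPair.comp_eq_zero_of_comp_eq_zero {bU : U →ₗ[R] U →ₗ[R] R}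
    {bV : V →ₗ[R] V →ₗ[R] R} {bW : W →ₗ[R] W →ₗ[R] R} (hbU : bU.IsRefl)
    (hbU' : bU.SeparatingLeft) {a : U →ₗ[R] V} {as : V →ₗ[R] U} {d : V →ₗ[R] W}
    {ds : W →ₗ[R] V} (ha : IsAdjointPair bU bV a as) (hd : IsAdjointPair bV bW d ds)
    (hda : d ∘ₗ a = 0) : as ∘ₗ ds = 0 := by
  ext y
  refine hbU' _ fun x ↦ hbU _ _ ?_
  have hadj := ha.comp hd x y
  simp only [Function.comp_apply] at hadj
  rw [comp_apply, ← hadj, ← comp_apply d a, hda, zero_apply, map_zero, zero_apply]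

theorem LinearMap.IsAdjointPair.apply_range_range_eq_zero {bV : V →ₗ[R] V →ₗ[R] R}
    {bW : W →ₗ[R] W →ₗ[R] R} {a : U →ₗ[R] V} {d : V →ₗ[R] W} {ds : W →ₗ[R] V}
    (hd : IsAdjointPair bV bW d ds) (hda : d ∘ₗ a = 0) :
    ∀ u ∈ range a, ∀ v ∈ range ds, bV u v = 0 := by
  rintro _ ⟨x, rfl⟩ _ ⟨y, rfl⟩
  rw [← hd, ← comp_apply d a, hda, zero_apply, map_zero, zero_apply]

theorem Submodule.inf_eq_bot_of_sup_eq_top_of_orthogonal {b : V →ₗ[R] V →ₗ[R] R}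
    (hb : b.IsRefl) (hb' : b.SeparatingLeft) {P Q : Submodule R V} (hPQ : P ⊔ Q = ⊤)
    (horth : ∀ p ∈ P, ∀ q ∈ Q, b p q = 0) : P ⊓ Q = ⊥ := by
  refine eq_bot_iff.mpr fun w ⟨hwP, hwQ⟩ ↦ (mem_bot R).mpr (hb' w fun y ↦ ?_)
  obtain ⟨p, hp, q, hq, rfl⟩ := mem_sup.mp (hPQ ▸ mem_top : y ∈ P ⊔ Q)
  rw [map_add, hb _ _ (horth p hp w hwQ), horth w hwP q hq, add_zero]

theorem range_sup_range_eq_top_of_surjective_hodgeLaplacian {a : U →ₗ[R] V}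
    {as : V →ₗ[R] U} {d : V →ₗ[R] W} {ds : W →ₗ[R] V}
    (h : Function.Surjective (hodgeLaplacian a as d ds)) : range a ⊔ range ds = ⊤ := by
  rw [sup_comm, eq_top_iff, ← range_eq_top.mpr h]
  exact (range_add_le _ _).trans (sup_le_sup (range_comp_le_range _ _) (range_comp_le_range _ _))

theorem hodgeLaplacian_comp_left {a : U →ₗ[R] V} (as : V →ₗ[R] U) {d : V →ₗ[R] W}
    (ds : W →ₗ[R] V) (hda : d ∘ₗ a = 0) :
    hodgeLaplacian a as d ds ∘ₗ a = a ∘ₗ (as ∘ₗ a) := by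
  rw [hodgeLaplacian, add_comp, comp_assoc, hda, comp_zero, zero_add, comp_assoc]

theorem hodgeLaplacian_comp_right (a : U →ₗ[R] V) {as : V →ₗ[R] U} (d : V →ₗ[R] W)
    {ds : W →ₗ[R] V} (hasds : as ∘ₗ ds = 0) :
    hodgeLaplacian a as d ds ∘ₗ ds = ds ∘ₗ (d ∘ₗ ds) := by
  rw [hodgeLaplacian, add_comp, comp_assoc, comp_assoc, hasds, comp_zero, add_zero]

end HodgeDecomposition

theorem Module.End.surjective_of_maxGenEigenspace_zero_eq_bot {K V : Type*} [Field K]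
    [AddCommGroup V] [Module K V] [FiniteDimensional K V] {f : Module.End K V}
    (hf : f.maxGenEigenspace 0 = ⊥) : Function.Surjective f := by
  refine injective_iff_surjective.mp (ker_eq_bot.mp (eq_bot_iff.mpr ?_))
  rw [← eigenspace_zero, ← hf]
  exact eigenspace_le_maxGenEigenspace

theorem hodge_decomposition {K U V W : Type*} [Field K]
    [AddCommGroup U] [Module K U] [AddCommGroup V] [Module K V] [AddCommGroup W] [Module K W]
    [FiniteDimensional K V] {bU : U →ₗ[K] U →ₗ[K] K} {bV : V →ₗ[K] V →ₗ[K] K}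
    {bW : W →ₗ[K] W →ₗ[K] K} (hbU : bU.IsRefl) (hbU' : bU.SeparatingLeft) (hbV : bV.IsRefl)
    (hbV' : bV.SeparatingLeft) {a : U →ₗ[K] V} {as : V →ₗ[K] U} {d : V →ₗ[K] W}
    {ds : W →ₗ[K] V} (ha : IsAdjointPair bU bV a as) (hd : IsAdjointPair bV bW d ds)
    (hda : d ∘ₗ a = 0) (hΔ : (hodgeLaplacian a as d ds).maxGenEigenspace 0 = ⊥) :
    range a ⊔ range ds = ⊤ ∧ range a ⊓ range ds = ⊥ ∧
      (∀ u ∈ range a, ∀ v ∈ range ds, bV u v = 0) ∧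
      map (hodgeLaplacian a as d ds) (range a) ≤ range a ∧
      map (hodgeLaplacian a as d ds) (range ds) ≤ range ds := by
  have hsup := range_sup_range_eq_top_of_surjective_hodgeLaplacian
    (Module.End.surjective_of_maxGenEigenspace_zero_eq_bot hΔ)
  have horth := hd.apply_range_range_eq_zero hda
  exact ⟨hsup, inf_eq_bot_of_sup_eq_top_of_orthogonal hbV hbV' hsup horth, horth,
    map_range_le_range_of_comp_eq (hodgeLaplacian_comp_left as ds hda),
    map_range_le_range_of_comp_eq
      (hodgeLaplacian_comp_right a d (ha.comp_eq_zero_of_comp_eq_zero hbU hbU' hd hda))⟩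

/-- if the Laplacians of a Z₂-graded finite dimensional complex with
non-degenerate symmetric bilinear forms are invertible (trivial generalized `0`-eigenspaces),
then `C^{k̄} = im d_{k+1̄} ⊕ im d^#_{k̄}`, the decomposition being `b`-orthogonal and invariant
under the Laplacian. -/
theorem image_decomposition_of_invertible_laplacian
    (C0 C1 : Type) [AddCommGroup C0] [Module ℂ C0] [AddCommGroup C1] [Module ℂ C1]
    [FiniteDimensional ℂ C0] [FiniteDimensional ℂ C1]
    (b0 : C0 →ₗ[ℂ] C0 →ₗ[ℂ] ℂ) (b1 : C1 →ₗ[ℂ] C1 →ₗ[ℂ] ℂ)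
    (hb0symm : ∀ x y, b0 x y = b0 y x) (hb1symm : ∀ x y, b1 x y = b1 y x)
    (hb0nd : ∀ x, (∀ y, b0 x y = 0) → x = 0) (hb1nd : ∀ x, (∀ y, b1 x y = 0) → x = 0)
    (d0 : C0 →ₗ[ℂ] C1) (d1 : C1 →ₗ[ℂ] C0)
    (hd10 : d1 ∘ₗ d0 = 0) (hd01 : d0 ∘ₗ d1 = 0)
    (d0s : C1 →ₗ[ℂ] C0) (d1s : C0 →ₗ[ℂ] C1)
    (hadj0 : ∀ x y, b1 (d0 x) y = b0 x (d0s y))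
    (hadj1 : ∀ x y, b0 (d1 x) y = b1 x (d1s y))
    (Δ0 : Module.End ℂ C0) (hΔ0 : Δ0 = d0s ∘ₗ d0 + d1 ∘ₗ d1s)
    (Δ1 : Module.End ℂ C1) (hΔ1 : Δ1 = d1s ∘ₗ d1 + d0 ∘ₗ d0s)
    (h0 : Δ0.maxGenEigenspace 0 = ⊥) (h1 : Δ1.maxGenEigenspace 0 = ⊥) :
    -- degree 0̄ : C^{0̄} = im d_{1̄} ⊕ im d^#_{0̄}
    (LinearMap.range d1 ⊔ LinearMap.range d0s = ⊤) ∧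
    (LinearMap.range d1 ⊓ LinearMap.range d0s = ⊥) ∧
    (∀ u ∈ LinearMap.range d1, ∀ v ∈ LinearMap.range d0s, b0 u v = 0) ∧
    (Submodule.map Δ0 (LinearMap.range d1) ≤ LinearMap.range d1) ∧
    (Submodule.map Δ0 (LinearMap.range d0s) ≤ LinearMap.range d0s) ∧
    -- degree 1̄ : C^{1̄} = im d_{0̄} ⊕ im d^#_{1̄}
    (LinearMap.range d0 ⊔ LinearMap.range d1s = ⊤) ∧
    (LinearMap.range d0 ⊓ LinearMap.range d1s = ⊥) ∧
    (∀ u ∈ LinearMap.range d0, ∀ v ∈ LinearMap.range d1s, b1 u v = 0) ∧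
    (Submodule.map Δ1 (LinearMap.range d0) ≤ LinearMap.range d0) ∧
    (Submodule.map Δ1 (LinearMap.range d1s) ≤ LinearMap.range d1s) := by
  have hb0 : b0.IsRefl := IsSymm.isRefl ⟨hb0symm⟩
  have hb1 : b1.IsRefl := IsSymm.isRefl ⟨hb1symm⟩
  subst hΔ0 hΔ1
  obtain ⟨hsup0, hinf0, horth0, hinv0, hinv0'⟩ :=
    hodge_decomposition hb1 hb1nd hb0 hb0nd hadj1 hadj0 hd01 h0
  obtain ⟨hsup1, hinf1, horth1, hinv1, hinv1'⟩ :=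
    hodge_decomposition hb0 hb0nd hb1 hb1nd hadj0 hadj1 hd10 h1
  exact ⟨hsup0, hinf0, horth0, hinv0, hinv0', hsup1, hinf1, horth1, hinv1, hinv1'⟩
end
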